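/- Let N be a finite nonempty player set and for each nonempty S ⊆ N let μ_S ∈ ℝ and σ_S > 0. Then the following are equivalent: (1) there exist d, r : N → ℝ (with no sign restriction on r) such that d(N) = μ_N, r(N) = 1, and for every nonempty S ⊆ N the pushforward of the Gaussian measure N(μ_N, σ_N²) under the map z ↦ d(S) + r(S)·(z − μ_N) second-order stochastically dominates N(μ_S, σ_S²); (2) there exist d, r : N → ℝ satisfying d(S) ≥ μ_S for all nonempty S ⊆ N, d(N) = μ_N, |r(S)| ≤ σ_S/σ_N for all nonempty S ⊆ N, and r(N) = 1. -/

import Mathlib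

open MeasureTheory ProbabilityTheory
open scoped NNReal ENNReal

/-- `P` second-order stochastically dominates `Q`. -/
def SSD (P Q : Measure ℝ) : Prop :=
  ∀ u : ℝ, (∫ z in Set.Iic u, (cdf P z - cdf Q z)) ≤ 0

/-!
By Tonelli, `∫_{(-∞, u]} F_P = E_P[(u - X)⁺]`, so for laws with a first moment `P ⪰_SSD Q` means
that `P` has the smaller expected shortfall `E[(u - X)⁺]` at every level `u`. For Gaussians this
holds iff `m_Q ≤ m_P` and `v_P ≤ v_Q`. If so, `Q = P ∗ N(m_Q - m_P, v_Q - v_P)`, and adding noise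
of non-positive mean can only increase the expected shortfall, as `(u - x - y)⁺ ≥ u - x - y`.
Conversely, letting `u → ∞` in `E[(u - X)⁺] = u - E[X] + E[(X - u)⁺]` compares the means, and if
`v_Q < v_P` the cdf of `Q` lies strictly below that of `P` far to the left, where the defining
integral is then positive. Coalitionwise, the image of `N(μ_N, σ_N²)` under
`z ↦ d(S) + r(S)(z - μ_N)` is `N(d(S), r(S)² σ_N²)`, so SSD reads `μ_S ≤ d(S)`,
`|r(S)| ≤ σ_S / σ_N`.
-/

open Filter Set Topology

section ExpectedShortfall

variable (P : Measure ℝ) [IsProbabilityMeasure P]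

lemma lintegral_Iic_cdf (u : ℝ) :
    ∫⁻ z in Iic u, ENNReal.ofReal (cdf P z) = ∫⁻ x, ENNReal.ofReal (u - x) ∂P := by
  have hcdf (z : ℝ) : ENNReal.ofReal (cdf P z) = ∫⁻ x, (Ici x).indicator 1 z ∂P := by
    rw [ofReal_cdf, ← lintegral_indicator_one measurableSet_Iic]
    rfl
  have hmeas : Measurable (Function.uncurry fun z x : ℝ => (Ici x).indicator (1 : ℝ → ℝ≥0∞) z) :=
    measurable_const.indicator (measurableSet_le measurable_snd measurable_fst)
  simp_rw [hcdf]
  rw [lintegral_lintegral_swap hmeas.aemeasurable]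
  congr 1 with x
  rw [lintegral_indicator_one measurableSet_Ici, Measure.restrict_apply measurableSet_Ici,
    Ici_inter_Iic, Real.volume_Icc]

variable {P}

lemma integrableOn_Iic_cdf (hP : Integrable id P) (u : ℝ) : IntegrableOn (cdf P) (Iic u) := by
  refine ⟨(monotone_cdf P).measurable.aestronglyMeasurable, ?_⟩
  rw [hasFiniteIntegral_iff_ofReal (ae_of_all _ (cdf_nonneg P)), lintegral_Iic_cdf]
  exact ((integrable_const u).sub hP).lintegral_lt_top

lemma setIntegral_Iic_cdf (u : ℝ) :
    ∫ z in Iic u, cdf P z = ∫ x, max (u - x) 0 ∂P := by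
  rw [integral_eq_lintegral_of_nonneg_ae (ae_of_all _ (cdf_nonneg P))
      (monotone_cdf P).measurable.aestronglyMeasurable,
    integral_eq_lintegral_of_nonneg_ae (f := fun x => max (u - x) 0)
      (ae_of_all _ fun x => le_max_right _ _) (by fun_prop), lintegral_Iic_cdf]
  simp

end ExpectedShortfall

lemma ssd_iff_integral_max_sub_le {P Q : Measure ℝ} [IsProbabilityMeasure P]
    [IsProbabilityMeasure Q] (hP : Integrable id P) (hQ : Integrable id Q) :
    SSD P Q ↔ ∀ u, ∫ x, max (u - x) 0 ∂P ≤ ∫ x, max (u - x) 0 ∂Q := by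
  refine forall_congr' fun u => ?_
  rw [integral_sub (integrableOn_Iic_cdf hP u) (integrableOn_Iic_cdf hQ u),
    setIntegral_Iic_cdf, setIntegral_Iic_cdf, sub_nonpos]

lemma tendsto_integral_max_sub_atTop {Q : Measure ℝ} (hQ : Integrable id Q) :
    Tendsto (fun u => ∫ x, max (x - u) 0 ∂Q) atTop (𝓝 0) := by
  have hbound : ∀ᶠ u in atTop, ∀ᵐ x ∂Q, ‖max (x - u) 0‖ ≤ |x| := by
    filter_upwards [eventually_ge_atTop 0] with u hu
    refine ae_of_all _ fun x => ?_
    rw [Real.norm_of_nonneg (le_max_right _ _)]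
    exact max_le (by linarith [le_abs_self x]) (abs_nonneg x)
  have hlim : ∀ᵐ x ∂Q, Tendsto (fun u => max (x - u) 0) atTop (𝓝 0) :=
    ae_of_all _ fun x => tendsto_const_nhds.congr' <| by
      filter_upwards [eventually_ge_atTop x] with u hu
      exact (max_eq_right (by linarith)).symm
  simpa using tendsto_integral_filter_of_dominated_convergence _
    (Eventually.of_forall fun u => by fun_prop) hbound hQ.abs hlim

lemma integral_const_sub_id {μ : Measure ℝ} [IsProbabilityMeasure μ] (hμ : Integrable id μ)
    (u : ℝ) : ∫ x, (u - x) ∂μ = u - ∫ x, x ∂μ := by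
  rw [integral_sub (g := fun x => x) (integrable_const u) hμ, integral_const, probReal_univ,
    one_smul]

lemma integral_id_le_of_integral_max_sub_le {P Q : Measure ℝ} [IsProbabilityMeasure P]
    [IsProbabilityMeasure Q] (hP : Integrable id P) (hQ : Integrable id Q)
    (h : ∀ u, ∫ x, max (u - x) 0 ∂P ≤ ∫ x, max (u - x) 0 ∂Q) :
    ∫ x, x ∂Q ≤ ∫ x, x ∂P := by
  have htail (u : ℝ) : ∫ x, x ∂Q - ∫ x, x ∂P ≤ ∫ x, max (x - u) 0 ∂Q := by
    have hP_ge : u - ∫ x, x ∂P ≤ ∫ x, max (u - x) 0 ∂P := by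
      rw [← integral_const_sub_id hP]
      exact integral_mono ((integrable_const u).sub hP) ((integrable_const u).sub hP).pos_part
        fun x => le_max_left _ _
    have hQ_eq : ∫ x, max (u - x) 0 ∂Q = u - ∫ x, x ∂Q + ∫ x, max (x - u) 0 ∂Q := by
      have hsplit (x : ℝ) : max (u - x) 0 = (u - x) + max (x - u) 0 := by
        rcases le_total x u with hx | hx <;> simp [hx]
      simp_rw [hsplit]
      rw [integral_add (f := fun x => u - x) ((integrable_const u).sub hQ)
        (g := fun x => max (x - u) 0) (hQ.sub (integrable_const u)).pos_part,
        integral_const_sub_id hQ]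
    linarith [h u]
  exact sub_nonpos.mp <| ge_of_tendsto' (tendsto_integral_max_sub_atTop hQ) htail

lemma integral_max_sub_le_conv {P ν : Measure ℝ} [IsProbabilityMeasure P] [IsProbabilityMeasure ν]
    (hν : Integrable id ν) (hν_mean : ∫ y, y ∂ν ≤ 0) (hPν : Integrable id (P ∗ ν)) (u : ℝ) :
    ∫ x, max (u - x) 0 ∂P ≤ ∫ z, max (u - z) 0 ∂(P ∗ ν) := by
  have hint : Integrable (fun z => max (u - z) 0) (P ∗ ν) := ((integrable_const u).sub hPν).pos_part
  rw [integral_conv hint]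
  have hinner : Integrable (fun x => ∫ y, max (u - (x + y)) 0 ∂ν) P := by
    refine ((integrable_conv_iff hint.1).mp hint).2.congr (ae_of_all _ fun x => ?_)
    simp only [Real.norm_of_nonneg (le_max_right _ 0)]
  refine integral_mono_of_nonneg (ae_of_all _ fun x => le_max_right _ _) hinner
    (ae_of_all _ fun x => max_le ?_ (integral_nonneg fun y => le_max_right _ _))
  have hshift : Integrable (fun y => u - x - y) ν := (integrable_const _).sub hν
  calc u - x ≤ u - x - ∫ y, y ∂ν := by linarith
    _ = ∫ y, (u - x - y) ∂ν := (integral_const_sub_id hν _).symm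
    _ ≤ ∫ y, max (u - (x + y)) 0 ∂ν :=
      integral_mono hshift (by simpa only [sub_sub] using hshift.pos_part) fun y => by
        simp only [sub_sub, le_max_left]

lemma strictMono_cdf_of_absolutelyContinuous {P : Measure ℝ} [IsProbabilityMeasure P]
    (hP : volume ≪ P) : StrictMono (cdf P) := by
  intro a b hab
  have hIoc : P (Ioc a b) ≠ 0 := fun h =>
    hab.not_ge (by simpa [Real.volume_Ioc] using hP h)
  rw [← measure_cdf P, StieltjesFunction.measure_Ioc, ne_eq, ENNReal.ofReal_eq_zero,
    not_le, sub_pos] at hIoc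
  exact hIoc

lemma not_ssd_of_cdf_lt_of_le {P Q : Measure ℝ} [IsProbabilityMeasure P]
    [IsProbabilityMeasure Q] (hP : Integrable id P) (hQ : Integrable id Q) (u : ℝ)
    (hlt : ∀ z ≤ u, cdf Q z < cdf P z) : ¬ SSD P Q := by
  have hgap (z : ℝ) (hz : z ∈ Iic u) : 0 < cdf P z - cdf Q z := sub_pos.2 (hlt z hz)
  have hsupp : Iic u ⊆ Function.support fun z => cdf P z - cdf Q z := fun z hz => (hgap z hz).ne'
  have hpos := (setIntegral_pos_iff_support_of_nonneg_ae
    ((ae_restrict_iff' measurableSet_Iic).2 (ae_of_all _ fun z hz => (hgap z hz).le))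
    ((integrableOn_Iic_cdf hP u).sub (integrableOn_Iic_cdf hQ u))).2
    (by simp [inter_eq_right.2 hsupp])
  exact fun hssd => (hssd u).not_gt hpos

lemma cdf_map_affine {P : Measure ℝ} [IsProbabilityMeasure P] {t : ℝ} (ht : 0 < t)
    (a m z : ℝ) : cdf (P.map fun x => a + t * (x - m)) z = cdf P (m + (z - a) / t) := by
  have : IsProbabilityMeasure (P.map fun x => a + t * (x - m)) :=
    Measure.isProbabilityMeasure_map (by fun_prop)
  rw [cdf_eq_real, cdf_eq_real, map_measureReal_apply (by fun_prop) measurableSet_Iic]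
  congr 1 with x
  simp only [mem_preimage, mem_Iic]
  rw [← sub_le_iff_le_add', le_div_iff₀ ht]
  constructor <;> intro h <;> linarith

variable {m m₁ m₂ : ℝ} {v v₁ v₂ : ℝ≥0}

lemma gaussianReal_map_affine (a b : ℝ) :
    (gaussianReal m v).map (fun z => a + b * (z - m)) =
      gaussianReal a ⟨b ^ 2 * v, by positivity⟩ := by
  have h := gaussianReal_const_add (gaussianReal_const_mul
    (gaussianReal_sub_const (HasLaw.id (μ := gaussianReal m v)) m) b) a
  rw [sub_self, mul_zero, zero_add] at h
  exact h.map_eq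

lemma integrable_id_gaussianReal : Integrable id (gaussianReal m v) :=
  memLp_one_iff_integrable.mp (memLp_id_gaussianReal 1)

lemma not_ssd_gaussianReal_of_lt (hv₂ : v₂ ≠ 0) (hlt : v₂ < v₁) :
    ¬ SSD (gaussianReal m₁ v₁) (gaussianReal m₂ v₂) := by
  have hv₁ : (0 : ℝ) < v₁ := v₂.coe_nonneg.trans_lt hlt
  set t := √(v₂ / v₁) with ht
  have ht₀ : 0 < t := Real.sqrt_pos.2 (div_pos (NNReal.coe_pos.2 (pos_iff_ne_zero.2 hv₂)) hv₁)
  have ht₁ : t < 1 := by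
    rw [ht, Real.sqrt_lt' one_pos, one_pow, div_lt_one hv₁]
    exact_mod_cast hlt
  have hQ : gaussianReal m₂ v₂ = (gaussianReal m₁ v₁).map fun x => m₂ + t * (x - m₁) := by
    rw [gaussianReal_map_affine]
    congr 1
    refine NNReal.eq (?_ : (v₂ : ℝ) = t ^ 2 * v₁)
    rw [ht, Real.sq_sqrt (div_nonneg v₂.coe_nonneg v₁.coe_nonneg), div_mul_cancel₀ _ hv₁.ne']
  -- `z₀` is the fixed point of the contraction `g x = m₂ + t (x - m₁)`; to its left
  -- `g⁻¹ z < z`, hence `F_Q z = F_P (g⁻¹ z) < F_P z`.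
  set z₀ := (m₂ - t * m₁) / (1 - t)
  refine not_ssd_of_cdf_lt_of_le integrable_id_gaussianReal integrable_id_gaussianReal
    (z₀ - 1) fun z hz => ?_
  rw [hQ, cdf_map_affine ht₀]
  refine strictMono_cdf_of_absolutelyContinuous
    (gaussianReal_absolutelyContinuous' m₁ (ne_of_gt hv₁)) ?_
  have hz₀ : z * (1 - t) < m₂ - t * m₁ := (lt_div_iff₀ (sub_pos.2 ht₁)).1 (by linarith)
  rw [← lt_sub_iff_add_lt', div_lt_iff₀ ht₀]
  linarith

theorem ssd_gaussianReal_iff (hv₂ : v₂ ≠ 0) :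
    SSD (gaussianReal m₁ v₁) (gaussianReal m₂ v₂) ↔ m₂ ≤ m₁ ∧ v₁ ≤ v₂ := by
  rw [ssd_iff_integral_max_sub_le integrable_id_gaussianReal integrable_id_gaussianReal]
  constructor
  · intro h
    refine ⟨?_, le_of_not_gt fun hlt =>
      not_ssd_gaussianReal_of_lt (m₁ := m₁) (m₂ := m₂) hv₂ hlt ?_⟩
    · simpa only [integral_id_gaussianReal] using integral_id_le_of_integral_max_sub_le
        integrable_id_gaussianReal integrable_id_gaussianReal h
    · rwa [ssd_iff_integral_max_sub_le integrable_id_gaussianReal integrable_id_gaussianReal]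
  · rintro ⟨hm, hv⟩
    have hconv : gaussianReal m₂ v₂ = gaussianReal m₁ v₁ ∗ gaussianReal (m₂ - m₁) (v₂ - v₁) := by
      rw [gaussianReal_conv_gaussianReal, add_sub_cancel, add_tsub_cancel_of_le hv]
    rw [hconv]
    exact integral_max_sub_le_conv integrable_id_gaussianReal
      (by rw [integral_id_gaussianReal]; linarith) (hconv ▸ integrable_id_gaussianReal)

lemma ssd_map_gaussianReal_iff (a b m' : ℝ) {s s' : ℝ} (hs : 0 < s) (hs' : 0 < s') :
    SSD ((gaussianReal m ⟨s ^ 2, sq_nonneg _⟩).map fun z => a + b * (z - m))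
        (gaussianReal m' ⟨s' ^ 2, sq_nonneg _⟩) ↔ m' ≤ a ∧ |b| ≤ s' / s := by
  refine (congrArg (SSD · _) (gaussianReal_map_affine a b)).to_iff.trans <|
    (ssd_gaussianReal_iff fun h => hs'.ne' ((pow_eq_zero_iff two_ne_zero).1
      (congrArg Subtype.val h))).trans (and_congr Iff.rfl ?_)
  change b ^ 2 * s ^ 2 ≤ s' ^ 2 ↔ _
  rw [le_div_iff₀ hs, ← mul_pow, sq_le_sq, abs_mul, abs_of_pos hs, abs_of_pos hs']

theorem ssd_core_normal_general_r_iff {N : Type*} [Fintype N] [Nonempty N]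
    (μ σ : Finset N → ℝ)
    (hσ : ∀ S : Finset N, S.Nonempty → 0 < σ S) :
    (∃ d r : N → ℝ, (∑ i : N, d i = μ Finset.univ) ∧ (∑ i : N, r i = 1) ∧
        ∀ S : Finset N, S.Nonempty →
          SSD ((gaussianReal (μ Finset.univ) ⟨σ Finset.univ ^ 2, sq_nonneg _⟩).map
              (fun z => (∑ i ∈ S, d i) + (∑ i ∈ S, r i) * (z - μ Finset.univ)))
            (gaussianReal (μ S) ⟨σ S ^ 2, sq_nonneg _⟩)) ↔
      (∃ d r : N → ℝ,
        (∀ S : Finset N, S.Nonempty → μ S ≤ ∑ i ∈ S, d i) ∧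
        (∑ i : N, d i = μ Finset.univ) ∧
        (∀ S : Finset N, S.Nonempty → |∑ i ∈ S, r i| ≤ σ S / σ Finset.univ) ∧
        (∑ i : N, r i = 1)) := by
  have hσN := hσ _ Finset.univ_nonempty
  constructor
  · rintro ⟨d, r, hd, hr, hssd⟩
    have h S hS := (ssd_map_gaussianReal_iff _ _ _ hσN (hσ S hS)).1 (hssd S hS)
    exact ⟨d, r, fun S hS => (h S hS).1, hd, fun S hS => (h S hS).2, hr⟩
  · rintro ⟨d, r, hd, hdN, hr, hrN⟩
    exact ⟨d, r, hdN, hrN, fun S hS =>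
      (ssd_map_gaussianReal_iff _ _ _ hσN (hσ S hS)).2 ⟨hd S hS, hr S hS⟩⟩
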